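/- For all n ≥ 1, the partitions of [n] avoiding both 12/3 and 13/2 are exactly those of the form 1/2/.../(k-1)/{k,k+1,...,n} for some k ∈ [n], and hence there are exactly n of them. -/
import Mathlib


open Finset

structure SetPartition (n : ℕ) where
  blocks : Finset (Finset ℕ)
  nonempty_mem : ∀ B ∈ blocks, B.Nonempty
  disj : ∀ B ∈ blocks, ∀ C ∈ blocks, B ≠ C → Disjoint B C
  cover : blocks.sup id = Finset.Icc 1 n

/-- `σ` contains the pattern `π`: there is an order-preserving choice of elements
and an injective assignment of blocks of `π` to distinct blocks of `σ`. -/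
def SetPartition.Contains {n k : ℕ} (σ : SetPartition n) (π : SetPartition k) : Prop :=
  ∃ f : ℕ → ℕ, StrictMonoOn f (Finset.Icc 1 k : Set ℕ) ∧
    ∃ g : Finset ℕ → Finset ℕ,
      (∀ B ∈ π.blocks, g B ∈ σ.blocks) ∧
      (∀ B ∈ π.blocks, ∀ C ∈ π.blocks, g B = g C → B = C) ∧
      (∀ B ∈ π.blocks, ∀ x ∈ B, f x ∈ g B)

def SetPartition.Avoids {n k : ℕ} (σ : SetPartition n) (π : SetPartition k) : Prop :=
  ¬ σ.Contains π

def pat1_2_3 : SetPartition 3 := ⟨{{1}, {2}, {3}}, by decide, by decide, by decide⟩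
def pat1_23 : SetPartition 3 := ⟨{{1}, {2, 3}}, by decide, by decide, by decide⟩
def pat12_3 : SetPartition 3 := ⟨{{1, 2}, {3}}, by decide, by decide, by decide⟩
def pat13_2 : SetPartition 3 := ⟨{{1, 3}, {2}}, by decide, by decide, by decide⟩
def pat123 : SetPartition 3 := ⟨{{1, 2, 3}}, by decide, by decide, by decide⟩

lemma SetPartition.ext' {n : ℕ} {σ τ : SetPartition n} (h : σ.blocks = τ.blocks) : σ = τ := by
  cases σ; cases τ; simp_all

lemma mem_cover {n : ℕ} (σ : SetPartition n) {B : Finset ℕ} (hB : B ∈ σ.blocks)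
    {x : ℕ} (hx : x ∈ B) : x ∈ Finset.Icc 1 n := by
  rw [← σ.cover, Finset.mem_sup]; exact ⟨B, hB, hx⟩

lemma exists_block {n : ℕ} (σ : SetPartition n) {x : ℕ} (hx : x ∈ Finset.Icc 1 n) :
    ∃ B ∈ σ.blocks, x ∈ B := by
  rw [← σ.cover, Finset.mem_sup] at hx; exact hx

lemma sm_aux {a b c : ℕ} (hab : a < b) (hbc : b < c) :
    StrictMonoOn (fun x => if x = 1 then a else if x = 2 then b else c)
      (Finset.Icc 1 3 : Set ℕ) := by
  intro x hx y hy hxy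
  simp only [Finset.coe_Icc, Set.mem_Icc, Finset.mem_coe, Finset.mem_Icc] at hx hy
  obtain ⟨hx1, hx2⟩ := hx; obtain ⟨hy1, hy2⟩ := hy
  interval_cases x <;> interval_cases y <;> simp <;> omega

lemma contains12_3 {n : ℕ} (σ : SetPartition n) {B C : Finset ℕ} (hB : B ∈ σ.blocks)
    (hC : C ∈ σ.blocks) (hBC : B ≠ C) {a b c : ℕ} (ha : a ∈ B) (hb : b ∈ B) (hc : c ∈ C)
    (hab : a < b) (hbc : b < c) : σ.Contains pat12_3 := by
  refine ⟨_, sm_aux hab hbc, fun S => if S = {1,2} then B else C, ?_, ?_, ?_⟩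
  · intro S hS
    simp only [pat12_3, Finset.mem_insert, Finset.mem_singleton] at hS
    rcases hS with h | h <;> subst h
    · beta_reduce
      rw [if_pos rfl]; exact hB
    · beta_reduce
      rw [if_neg (by decide)]; exact hC
  · intro S hS T hT hST
    simp only [pat12_3, Finset.mem_insert, Finset.mem_singleton] at hS hT
    rcases hS with h | h <;> rcases hT with h' | h' <;> subst h <;> subst h'
    · rfl
    · exact absurd (by beta_reduce at hST; rwa [if_pos rfl, if_neg (by decide)] at hST) hBC
    · exact absurd (by beta_reduce at hST; rw [if_neg (by decide), if_pos rfl] at hST; exact hST.symm) hBC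
    · rfl
  · intro S hS x hx
    simp only [pat12_3, Finset.mem_insert, Finset.mem_singleton] at hS
    rcases hS with h | h <;> subst h
    · beta_reduce
      rw [if_pos rfl]
      simp only [Finset.mem_insert, Finset.mem_singleton] at hx
      rcases hx with h | h <;> subst h <;> simp [ha, hb]
    · beta_reduce
      rw [if_neg (by decide)]
      simp only [Finset.mem_singleton] at hx
      subst hx; simpa using hc

lemma contains13_2 {n : ℕ} (σ : SetPartition n) {B C : Finset ℕ} (hB : B ∈ σ.blocks)
    (hC : C ∈ σ.blocks) (hBC : B ≠ C) {a b c : ℕ} (ha : a ∈ B) (hc : c ∈ B) (hb : b ∈ C)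
    (hab : a < b) (hbc : b < c) : σ.Contains pat13_2 := by
  refine ⟨_, sm_aux hab hbc, fun S => if S = {1,3} then B else C, ?_, ?_, ?_⟩
  · intro S hS
    simp only [pat13_2, Finset.mem_insert, Finset.mem_singleton] at hS
    rcases hS with h | h <;> subst h
    · beta_reduce
      rw [if_pos rfl]; exact hB
    · beta_reduce
      rw [if_neg (by decide)]; exact hC
  · intro S hS T hT hST
    simp only [pat13_2, Finset.mem_insert, Finset.mem_singleton] at hS hT
    rcases hS with h | h <;> rcases hT with h' | h' <;> subst h <;> subst h'
    · rfl
    · exact absurd (by beta_reduce at hST; rwa [if_pos rfl, if_neg (by decide)] at hST) hBC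
    · exact absurd (by beta_reduce at hST; rw [if_neg (by decide), if_pos rfl] at hST; exact hST.symm) hBC
    · rfl
  · intro S hS x hx
    simp only [pat13_2, Finset.mem_insert, Finset.mem_singleton] at hS
    rcases hS with h | h <;> subst h
    · beta_reduce
      rw [if_pos rfl]
      simp only [Finset.mem_insert, Finset.mem_singleton] at hx
      rcases hx with h | h <;> subst h <;> simp [ha, hc]
    · beta_reduce
      rw [if_neg (by decide)]
      simp only [Finset.mem_singleton] at hx
      subst hx; simpa using hb

lemma convex_of_avoids {n : ℕ} (σ : SetPartition n) (h : σ.Avoids pat13_2)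
    {B : Finset ℕ} (hB : B ∈ σ.blocks) {a b c : ℕ} (ha : a ∈ B) (hc : c ∈ B)
    (hab : a < b) (hbc : b < c) : b ∈ B := by
  by_contra hb
  have hbn : b ∈ Finset.Icc 1 n := by
    have h1 := Finset.mem_Icc.mp (mem_cover σ hB ha)
    have h2 := Finset.mem_Icc.mp (mem_cover σ hB hc)
    exact Finset.mem_Icc.mpr ⟨by omega, by omega⟩
  obtain ⟨C, hC, hbC⟩ := exists_block σ hbn
  have hBC : B ≠ C := fun e => hb (e ▸ hbC)
  exact h (contains13_2 σ hB hC hBC ha hc hbC hab hbc)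

lemma upclosed_of_avoids {n : ℕ} (σ : SetPartition n) (h : σ.Avoids pat12_3)
    {B : Finset ℕ} (hB : B ∈ σ.blocks) {a b c : ℕ} (ha : a ∈ B) (hb : b ∈ B)
    (hab : a < b) (hbc : b < c) (hcn : c ≤ n) : c ∈ B := by
  by_contra hcB
  have hcn' : c ∈ Finset.Icc 1 n := Finset.mem_Icc.mpr ⟨by omega, hcn⟩
  obtain ⟨C, hC, hcC⟩ := exists_block σ hcn'
  have hBC : B ≠ C := fun e => hcB (e ▸ hcC)
  exact h (contains12_3 σ hB hC hBC ha hb hcC hab hbc)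

lemma canon_of_avoids {n : ℕ} (hn : 1 ≤ n) (σ : SetPartition n)
    (h1 : σ.Avoids pat12_3) (h2 : σ.Avoids pat13_2) :
    ∃ k ∈ Finset.Icc 1 n, σ.blocks = insert (Finset.Icc k n)
      ((Finset.Icc 1 (k - 1)).image (fun x => ({x} : Finset ℕ))) := by
  obtain ⟨B₀, hB₀, hnB₀⟩ := exists_block σ (Finset.mem_Icc.mpr ⟨hn, le_refl n⟩)
  have hB₀ne : B₀.Nonempty := σ.nonempty_mem B₀ hB₀
  set k := B₀.min' hB₀ne with hk
  have hkB₀ : k ∈ B₀ := B₀.min'_mem hB₀ne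
  have hkIcc : k ∈ Finset.Icc 1 n := mem_cover σ hB₀ hkB₀
  obtain ⟨hk1, hkn⟩ := Finset.mem_Icc.mp hkIcc
  have hB₀eq : B₀ = Finset.Icc k n := by
    ext x
    simp only [Finset.mem_Icc]
    constructor
    · intro hx
      exact ⟨B₀.min'_le x hx, (Finset.mem_Icc.mp (mem_cover σ hB₀ hx)).2⟩
    · rintro ⟨hkx, hxn⟩
      rcases eq_or_lt_of_le hkx with rfl | hkx'
      · exact hkB₀
      rcases eq_or_lt_of_le hxn with rfl | hxn'
      · exact hnB₀
      exact convex_of_avoids σ h2 hB₀ hkB₀ hnB₀ hkx' hxn'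
  -- every other block is a singleton below k
  have hsing : ∀ B ∈ σ.blocks, B ≠ B₀ → ∃ x, x ∈ Finset.Icc 1 (k - 1) ∧ B = {x} := by
    intro B hB hBne
    obtain ⟨x, hx⟩ := σ.nonempty_mem B hB
    have hxlt : ∀ y ∈ B, y < k := by
      intro y hy
      by_contra hyk
      push_neg at hyk
      have hyB₀ : y ∈ B₀ := by
        rw [hB₀eq]
        exact Finset.mem_Icc.mpr ⟨hyk, (Finset.mem_Icc.mp (mem_cover σ hB hy)).2⟩
      exact (Finset.disjoint_left.mp (σ.disj B hB B₀ hB₀ hBne) hy) hyB₀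
    have hx1 : 1 ≤ x := (Finset.mem_Icc.mp (mem_cover σ hB hx)).1
    refine ⟨x, Finset.mem_Icc.mpr ⟨hx1, by have := hxlt x hx; omega⟩, ?_⟩
    ext y
    simp only [Finset.mem_singleton]
    constructor
    · intro hy
      by_contra hyx
      have hyk := hxlt y hy
      have hxk := hxlt x hx
      rcases lt_or_gt_of_ne hyx with hlt | hlt
      · exact h1 (contains12_3 σ hB hB₀ hBne hy hx hnB₀ hlt (by omega))
      · exact h1 (contains12_3 σ hB hB₀ hBne hx hy hnB₀ hlt (by omega))
    · rintro rfl; exact hx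
  refine ⟨k, hkIcc, ?_⟩
  ext B
  simp only [Finset.mem_insert, Finset.mem_image]
  constructor
  · intro hB
    by_cases hBe : B = B₀
    · exact Or.inl (hBe.trans hB₀eq)
    · obtain ⟨x, hx, rfl⟩ := hsing B hB hBe
      exact Or.inr ⟨x, hx, rfl⟩
  · rintro (rfl | ⟨x, hx, rfl⟩)
    · rwa [← hB₀eq]
    · obtain ⟨hx1, hxk⟩ := Finset.mem_Icc.mp hx
      have hxn : x ∈ Finset.Icc 1 n := Finset.mem_Icc.mpr ⟨hx1, by omega⟩
      obtain ⟨C, hC, hxC⟩ := exists_block σ hxn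
      have hCne : C ≠ B₀ := by
        rintro rfl
        rw [hB₀eq] at hxC
        have := (Finset.mem_Icc.mp hxC).1
        omega
      obtain ⟨y, _, rfl⟩ := hsing C hC hCne
      rw [Finset.mem_singleton] at hxC
      subst hxC
      exact hC

lemma avoids_of_canon {n k : ℕ} (σ : SetPartition n) (hk1 : 1 ≤ k) (hkn : k ≤ n)
    (hσ : σ.blocks = insert (Finset.Icc k n)
      ((Finset.Icc 1 (k - 1)).image (fun x => ({x} : Finset ℕ)))) :
    σ.Avoids pat12_3 ∧ σ.Avoids pat13_2 := by
  have hclass : ∀ B ∈ σ.blocks, B = Finset.Icc k n ∨ ∃ x, 1 ≤ x ∧ x ≤ k - 1 ∧ B = {x} := by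
    rw [hσ]
    intro B hB
    simp only [Finset.mem_insert, Finset.mem_image, Finset.mem_Icc] at hB
    rcases hB with h | ⟨x, ⟨hx1, hx2⟩, h⟩
    · exact Or.inl h
    · exact Or.inr ⟨x, hx1, hx2, h.symm⟩
  have hmem1 : (1 : ℕ) ∈ (Finset.Icc 1 3 : Set ℕ) := by simp
  have hmem2 : (2 : ℕ) ∈ (Finset.Icc 1 3 : Set ℕ) := by simp
  have hmem3 : (3 : ℕ) ∈ (Finset.Icc 1 3 : Set ℕ) := by simp
  constructor
  · rintro ⟨f, hf, g, hg1, hg2, hg3⟩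
    have hb12 : ({1, 2} : Finset ℕ) ∈ pat12_3.blocks := by decide
    have hb3 : ({3} : Finset ℕ) ∈ pat12_3.blocks := by decide
    have h12 : f 1 < f 2 := hf hmem1 hmem2 (by norm_num)
    have h23 : f 2 < f 3 := hf hmem2 hmem3 (by norm_num)
    have hf1 : f 1 ∈ g {1, 2} := hg3 _ hb12 1 (by decide)
    have hf2 : f 2 ∈ g {1, 2} := hg3 _ hb12 2 (by decide)
    have hf3 : f 3 ∈ g {3} := hg3 _ hb3 3 (by decide)
    have hgne : g {1, 2} ≠ g {3} := fun e => by
      have := hg2 _ hb12 _ hb3 e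
      exact absurd this (by decide)
    have hBeq : g {1, 2} = Finset.Icc k n := by
      rcases hclass _ (hg1 _ hb12) with h | ⟨x, _, _, h⟩
      · exact h
      · rw [h, Finset.mem_singleton] at hf1 hf2
        omega
    have hkf2 : k ≤ f 2 := by
      rw [hBeq] at hf2
      exact (Finset.mem_Icc.mp hf2).1
    rcases hclass _ (hg1 _ hb3) with h | ⟨x, _, hx2, h⟩
    · exact hgne (hBeq.trans h.symm)
    · rw [h, Finset.mem_singleton] at hf3
      omega
  · rintro ⟨f, hf, g, hg1, hg2, hg3⟩
    have hb13 : ({1, 3} : Finset ℕ) ∈ pat13_2.blocks := by decide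
    have hb2 : ({2} : Finset ℕ) ∈ pat13_2.blocks := by decide
    have h12 : f 1 < f 2 := hf hmem1 hmem2 (by norm_num)
    have h23 : f 2 < f 3 := hf hmem2 hmem3 (by norm_num)
    have hf1 : f 1 ∈ g {1, 3} := hg3 _ hb13 1 (by decide)
    have hf3 : f 3 ∈ g {1, 3} := hg3 _ hb13 3 (by decide)
    have hf2 : f 2 ∈ g {2} := hg3 _ hb2 2 (by decide)
    have hgne : g {1, 3} ≠ g {2} := fun e => by
      have := hg2 _ hb13 _ hb2 e
      exact absurd this (by decide)
    have hBeq : g {1, 3} = Finset.Icc k n := by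
      rcases hclass _ (hg1 _ hb13) with h | ⟨x, _, _, h⟩
      · exact h
      · rw [h, Finset.mem_singleton] at hf1 hf3
        omega
    have hkf1 : k ≤ f 1 := by
      rw [hBeq] at hf1
      exact (Finset.mem_Icc.mp hf1).1
    rcases hclass _ (hg1 _ hb2) with h | ⟨x, _, hx2, h⟩
    · exact hgne (hBeq.trans h.symm)
    · rw [h, Finset.mem_singleton] at hf2
      omega

def canonPart (n k : ℕ) (hk1 : 1 ≤ k) (hkn : k ≤ n) : SetPartition n where
  blocks := insert (Finset.Icc k n) ((Finset.Icc 1 (k - 1)).image (fun x => ({x} : Finset ℕ)))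
  nonempty_mem := by
    intro B hB
    simp only [Finset.mem_insert, Finset.mem_image] at hB
    rcases hB with rfl | ⟨x, _, rfl⟩
    · exact ⟨k, Finset.mem_Icc.mpr ⟨le_refl k, hkn⟩⟩
    · exact ⟨x, Finset.mem_singleton_self x⟩
  disj := by
    intro B hB C hC hBC
    simp only [Finset.mem_insert, Finset.mem_image, Finset.mem_Icc] at hB hC
    rw [Finset.disjoint_left]
    rcases hB with rfl | ⟨x, ⟨hx1, hx2⟩, rfl⟩ <;> rcases hC with rfl | ⟨y, ⟨hy1, hy2⟩, rfl⟩
    · exact absurd rfl hBC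
    · intro a ha
      rw [Finset.mem_Icc] at ha
      rw [Finset.mem_singleton]
      omega
    · intro a ha
      rw [Finset.mem_singleton] at ha
      rw [Finset.mem_Icc]
      omega
    · intro a ha
      rw [Finset.mem_singleton] at ha ⊢
      rintro rfl
      exact hBC (by rw [ha])
  cover := by
    ext x
    simp only [Finset.mem_sup, Finset.mem_insert, Finset.mem_image, Finset.mem_Icc, id]
    constructor
    · rintro ⟨B, rfl | ⟨y, ⟨hy1, hy2⟩, rfl⟩, hx⟩
      · rw [Finset.mem_Icc] at hx
        omega
      · rw [Finset.mem_singleton] at hx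
        omega
    · rintro ⟨hx1, hx2⟩
      by_cases h : k ≤ x
      · exact ⟨Finset.Icc k n, Or.inl rfl, Finset.mem_Icc.mpr ⟨h, hx2⟩⟩
      · exact ⟨{x}, Or.inr ⟨x, ⟨hx1, by omega⟩, rfl⟩, Finset.mem_singleton_self x⟩

lemma canon_card {n k : ℕ} (hk1 : 1 ≤ k) (hkn : k ≤ n) :
    (insert (Finset.Icc k n) ((Finset.Icc 1 (k - 1)).image (fun x => ({x} : Finset ℕ)))).card
      = k := by
  rw [Finset.card_insert_of_notMem, Finset.card_image_of_injective _ Finset.singleton_injective,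
    Nat.card_Icc]
  · omega
  · simp only [Finset.mem_image, Finset.mem_Icc, not_exists]
    rintro x ⟨⟨hx1, hx2⟩, hx⟩
    have : n ∈ ({x} : Finset ℕ) := hx ▸ Finset.mem_Icc.mpr ⟨hkn, le_refl n⟩
    rw [Finset.mem_singleton] at this
    omega

theorem stmt4 (n : ℕ) (hn : 1 ≤ n) :
    (∀ σ : SetPartition n,
      (σ.Avoids pat12_3 ∧ σ.Avoids pat13_2) ↔
        ∃ k ∈ Finset.Icc 1 n,
          σ.blocks = insert (Finset.Icc k n)
            ((Finset.Icc 1 (k - 1)).image (fun x => ({x} : Finset ℕ)))) ∧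
    ({σ : SetPartition n | σ.Avoids pat12_3 ∧ σ.Avoids pat13_2}).ncard = n := by

  have hiff : ∀ σ : SetPartition n,
      (σ.Avoids pat12_3 ∧ σ.Avoids pat13_2) ↔
        ∃ k ∈ Finset.Icc 1 n,
          σ.blocks = insert (Finset.Icc k n)
            ((Finset.Icc 1 (k - 1)).image (fun x => ({x} : Finset ℕ))) := by
    intro σ
    constructor
    · rintro ⟨h1, h2⟩
      exact canon_of_avoids hn σ h1 h2
    · rintro ⟨k, hk, hσ⟩
      obtain ⟨hk1, hkn⟩ := Finset.mem_Icc.mp hk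
      exact avoids_of_canon σ hk1 hkn hσ
  refine ⟨hiff, ?_⟩
  have hbij : Set.BijOn (fun σ : SetPartition n => σ.blocks.card)
      {σ : SetPartition n | σ.Avoids pat12_3 ∧ σ.Avoids pat13_2} ↑(Finset.Icc 1 n) := by
    refine ⟨?_, ?_, ?_⟩
    · intro σ hσ
      obtain ⟨k, hk, hσb⟩ := (hiff σ).mp hσ
      obtain ⟨hk1, hkn⟩ := Finset.mem_Icc.mp hk
      have : σ.blocks.card = k := by rw [hσb]; exact canon_card hk1 hkn
      simpa [this] using hk
    · intro σ hσ τ hτ he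
      obtain ⟨k, hk, hσb⟩ := (hiff σ).mp hσ
      obtain ⟨j, hj, hτb⟩ := (hiff τ).mp hτ
      obtain ⟨hk1, hkn⟩ := Finset.mem_Icc.mp hk
      obtain ⟨hj1, hjn⟩ := Finset.mem_Icc.mp hj
      have e1 : σ.blocks.card = k := by rw [hσb]; exact canon_card hk1 hkn
      have e2 : τ.blocks.card = j := by rw [hτb]; exact canon_card hj1 hjn
      simp only at he
      have : k = j := by omega
      subst this
      exact SetPartition.ext' (hσb.trans hτb.symm)
    · intro k hk
      rw [Finset.mem_coe] at hk
      obtain ⟨hk1, hkn⟩ := Finset.mem_Icc.mp hk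
      refine ⟨canonPart n k hk1 hkn, (hiff _).mpr ⟨k, hk, rfl⟩, ?_⟩
      exact canon_card hk1 hkn
  rw [← Set.ncard_image_of_injOn hbij.injOn, hbij.image_eq, Set.ncard_coe_finset, Nat.card_Icc]
  omega
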